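/- arXiv:1411.0944 — 4 statements merged into one kernel-verified Lean document; each statement's English description precedes it below -/
import Mathlib

section
/- Let v be a uniform weighted game on N = {1,…,n} with weighted representation [q; w_1,…,w_n]. Then the raw Public Good index and the raw Deegan-Packel index satisfy local monotonicity on v: w_i ≥ w_j implies PGI^r_i(v) ≥ PGI^r_j(v) and DP^r_i(v) ≥ DP^r_j(v). -/
open scoped Classical

/-- A simple game on the player set `{1,…,n}` (modeled as `Fin n`):
a monotone map from coalitions to `{0,1}` (modeled as `Bool`) that is
`0` on the empty coalition and `1` on the grand coalition. -/
structure SimpleGame (n : ℕ) where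
  win : Finset (Fin n) → Bool
  win_empty : win ∅ = false
  win_univ : win Finset.univ = true
  win_mono : ∀ ⦃S T : Finset (Fin n)⦄, S ⊆ T → win S = true → win T = true

namespace SimpleGame

variable {n : ℕ}

/-- Player `i` dominates player `j`: `v((S ∪ {i}) \ {j}) ≥ v(S)` for every
coalition `S` with `j ∈ S` and `i ∉ S`. -/
def Dominates (v : SimpleGame n) (i j : Fin n) : Prop :=
  ∀ S : Finset (Fin n), j ∈ S → i ∉ S → v.win S ≤ v.win ((S ∪ {i}) \ {j})

/-- The game is complete if the dominance relation is a total preorder. -/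
def IsComplete (v : SimpleGame n) : Prop :=
  (∀ i, v.Dominates i i) ∧
  (∀ i j, v.Dominates i j ∨ v.Dominates j i) ∧
  (∀ i j k, v.Dominates i j → v.Dominates j k → v.Dominates i k)

/-- `S` is a minimal winning coalition: winning and every proper subset is losing. -/
def IsMWC (v : SimpleGame n) (S : Finset (Fin n)) : Prop :=
  v.win S = true ∧ ∀ T ⊂ S, v.win T = false

/-- `M_i`: the set of minimal winning coalitions containing player `i`. -/
noncomputable def Mset (v : SimpleGame n) (i : Fin n) : Finset (Finset (Fin n)) :=
  Finset.univ.filter fun S => v.IsMWC S ∧ i ∈ S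

/-- `M_i(l)`: minimal winning coalitions of cardinality `l` containing `i`. -/
noncomputable def Mlset (v : SimpleGame n) (i : Fin n) (l : ℕ) : Finset (Finset (Fin n)) :=
  (v.Mset i).filter fun S => S.card = l

/-- Raw Public Good index: `PGI^r_i(v) = |M_i|`. -/
noncomputable def PGI (v : SimpleGame n) (i : Fin n) : ℕ := (v.Mset i).card

/-- Raw Deegan-Packel index: `DP^r_i(v) = Σ_{S ∈ M_i} 1/|S|`. -/
noncomputable def DP (v : SimpleGame n) (i : Fin n) : ℝ :=
  ∑ S ∈ v.Mset i, (1 : ℝ) / (S.card : ℝ)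

/-- The game is uniform if all minimal winning coalitions have the same cardinality. -/
def IsUniform (v : SimpleGame n) : Prop :=
  ∀ S T, v.IsMWC S → v.IsMWC T → S.card = T.card

/-- `[q; w]` is a weighted representation of `v`. -/
def IsWeightedRep (v : SimpleGame n) (q : ℝ) (w : Fin n → ℝ) : Prop :=
  0 < q ∧ (∀ i, 0 ≤ w i) ∧ ∀ S : Finset (Fin n), v.win S = true ↔ q ≤ ∑ i ∈ S, w i

/-- The game is weighted. -/
def IsWeighted (v : SimpleGame n) : Prop := ∃ q w, v.IsWeightedRep q w

/-- `D_i`: coalitions decisive for player `i`. -/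
noncomputable def Dset (v : SimpleGame n) (i : Fin n) : Finset (Finset (Fin n)) :=
  Finset.univ.filter fun S => i ∈ S ∧ v.win S = true ∧ v.win (S.erase i) = false

/-- Raw Banzhaf index: `Bz^r_i(v) = |D_i|`. -/
noncomputable def Bz (v : SimpleGame n) (i : Fin n) : ℕ := (v.Dset i).card

/-- `S` is a shift-minimal winning coalition. -/
def IsSMWC (v : SimpleGame n) (S : Finset (Fin n)) : Prop :=
  v.IsMWC S ∧ ∀ i ∈ S, ∀ j ∉ S, v.Dominates i j → ¬ v.Dominates j i →
    v.win ((S \ {i}) ∪ {j}) = false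

/-- `𝒮_i`: the set of shift-minimal winning coalitions containing player `i`. -/
noncomputable def Sset (v : SimpleGame n) (i : Fin n) : Finset (Finset (Fin n)) :=
  Finset.univ.filter fun S => v.IsSMWC S ∧ i ∈ S

/-- Raw Shift index: `S^r_i(v) = |𝒮_i|`. -/
noncomputable def ShiftIdx (v : SimpleGame n) (i : Fin n) : ℕ := (v.Sset i).card

/-- The number of players for which the coalition `S` is decisive. -/
noncomputable def numDecisive (v : SimpleGame n) (S : Finset (Fin n)) : ℕ :=
  (Finset.univ.filter fun k => k ∈ S ∧ v.win S = true ∧ v.win (S.erase k) = false).card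

/-- Raw Johnston index: `Jo^r_i(v) = Σ_{S ∈ D_i} 1/#{decisive players of S}`. -/
noncomputable def Jo (v : SimpleGame n) (i : Fin n) : ℝ :=
  ∑ S ∈ v.Dset i, (1 : ℝ) / (v.numDecisive S : ℝ)

/-- `i` is a null player: it belongs to no minimal winning coalition. -/
def IsNull (v : SimpleGame n) (i : Fin n) : Prop := ∀ S, v.IsMWC S → i ∉ S

end SimpleGame

/-- A power index: assigns to every `n`-player simple game a vector in `ℝ^n`. -/
abbrev PowerIndex : Type := ∀ n : ℕ, SimpleGame n → Fin n → ℝ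

/-- A class of games (one set of games for every number of players). -/
abbrev GameClass : Type := ∀ n : ℕ, Set (SimpleGame n)

/-- Convex combination `P^α = Σ_h α_h P^h` of power indices. -/
noncomputable def convexComb {r : ℕ} (α : Fin r → ℝ) (P : Fin r → PowerIndex) : PowerIndex :=
  fun n v i => ∑ h, α h * P h n v i

/-- `Q` satisfies local monotonicity on the `n`-player games of `𝔊`. -/
def LMon (𝔊 : GameClass) (n : ℕ) (Q : PowerIndex) : Prop :=
  ∀ v ∈ 𝔊 n, ∀ i j : Fin n, v.Dominates i j → Q n v j ≤ Q n v i

/-- The cost of local monotonicity `c_𝒫(n,𝔊)`. -/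
noncomputable def costLM {r : ℕ} [NeZero r] (P : Fin r → PowerIndex) (n : ℕ)
    (𝔊 : GameClass) : ℝ :=
  sInf {β : ℝ | β ∈ Set.Icc (0 : ℝ) 1 ∧
    ∀ α ∈ stdSimplex ℝ (Fin r), β ≤ α 0 → LMon 𝔊 n (convexComb α P)}

/-- The raw Banzhaf index as a power index. -/
noncomputable def BzPI : PowerIndex := fun _ v i => (v.Bz i : ℝ)

/-- The raw Public Good index as a power index. -/
noncomputable def PGIPI : PowerIndex := fun _ v i => (v.PGI i : ℝ)

/-- The raw Shift index as a power index. -/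
noncomputable def ShiftPI : PowerIndex := fun _ v i => (v.ShiftIdx i : ℝ)

/-- The raw Johnston index as a power index. -/
noncomputable def JoPI : PowerIndex := fun _ v i => v.Jo i

/-- The raw Deegan-Packel index as a power index. -/
noncomputable def DPPI : PowerIndex := fun _ v i => v.DP i

/-- `𝔚`: the class of weighted games. -/
def WeightedClass : GameClass := fun _ => {v | v.IsWeighted}

/-!
If `i` dominates `j`, exchanging `j` for `i` in a minimal winning coalition gives a winning
coalition of the same size, which in a uniform game is again minimal winning. This injects `M_j`
into `M_i` preserving sizes, so every sum over `M_i` of a nonnegative function of the coalition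
size, such as `PGI^r_i` and `DP^r_i`, dominates the one over `M_j`. Weights `w j ≤ w i` make `i`
dominate `j`.
-/

namespace Finset

variable {α : Type*} [DecidableEq α]

def exchange (i j : α) (S : Finset α) : Finset α :=
  if i ∈ S then S else insert i (S.erase j)

theorem exchange_of_mem {i j : α} {S : Finset α} (h : i ∈ S) : exchange i j S = S :=
  if_pos h

theorem exchange_of_notMem {i j : α} {S : Finset α} (h : i ∉ S) :
    exchange i j S = insert i (S.erase j) :=
  if_neg h

theorem mem_exchange_self (i j : α) (S : Finset α) : i ∈ exchange i j S := by
  by_cases h : i ∈ S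
  · rwa [exchange_of_mem h]
  · rw [exchange_of_notMem h]
    exact mem_insert_self i _

theorem card_exchange {i j : α} {S : Finset α} (hj : j ∈ S) :
    (exchange i j S).card = S.card := by
  by_cases h : i ∈ S
  · rw [exchange_of_mem h]
  · rw [exchange_of_notMem h, card_insert_of_notMem fun hi => h (mem_of_mem_erase hi),
      card_erase_add_one hj]

theorem exchange_exchange {i j : α} {S : Finset α} (hij : i ≠ j) (hj : j ∈ S) :
    exchange j i (exchange i j S) = S := by
  by_cases h : i ∈ S
  · rw [exchange_of_mem h, exchange_of_mem hj]
  · have hj' : j ∉ insert i (S.erase j) := by simp [hij.symm]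
    rw [exchange_of_notMem h, exchange_of_notMem hj',
      erase_insert fun hi => h (mem_of_mem_erase hi), insert_erase hj]

theorem injOn_exchange {i j : α} (hij : i ≠ j) : Set.InjOn (exchange i j) {S | j ∈ S} :=
  fun _ hS _ hT hST => by
    rw [← exchange_exchange hij hS, ← exchange_exchange hij hT, hST]

end Finset

namespace SimpleGame

open Finset

variable {n : ℕ} {v : SimpleGame n}

theorem exists_isMWC_subset {S : Finset (Fin n)} (hS : v.win S = true) :
    ∃ T ⊆ S, v.IsMWC T := by
  induction S using Finset.strongInduction with
  | _ S ih =>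
    by_cases h : ∃ T ⊂ S, v.win T = true
    · obtain ⟨T, hTS, hT⟩ := h
      obtain ⟨U, hUT, hU⟩ := ih T hTS hT
      exact ⟨U, hUT.trans hTS.subset, hU⟩
    · exact ⟨S, Subset.rfl, hS,
        fun T hTS => Bool.eq_false_iff.mpr fun hT => h ⟨T, hTS, hT⟩⟩

theorem IsUniform.isMWC_of_card_eq (huni : v.IsUniform) {S T : Finset (Fin n)}
    (hS : v.IsMWC S) (hT : v.win T = true) (hcard : T.card = S.card) : v.IsMWC T := by
  refine ⟨hT, fun U hUT => ?_⟩
  by_contra hU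
  obtain ⟨U', hU'U, hU'⟩ := exists_isMWC_subset (Bool.not_eq_false _ ▸ hU)
  have := card_le_card hU'U
  have := card_lt_card hUT
  have := huni U' S hU' hS
  omega

theorem Dominates.win_exchange {i j : Fin n} (hdom : v.Dominates i j) {S : Finset (Fin n)}
    (hj : j ∈ S) (hS : v.win S = true) : v.win (exchange i j S) = true := by
  by_cases hi : i ∈ S
  · rwa [exchange_of_mem hi]
  · have hij : i ≠ j := by rintro rfl; exact hi hj
    have hswap : (S ∪ {i}) \ {j} = insert i (S.erase j) := by
      ext k; by_cases hk : k = i <;> simp [hk, hij, and_comm]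
    rw [exchange_of_notMem hi, ← hswap]
    exact Bool.le_iff_imp.mp (hdom S hj hi) hS

theorem IsUniform.exchange_mem_Mset (huni : v.IsUniform) {i j : Fin n} (hdom : v.Dominates i j)
    {S : Finset (Fin n)} (hS : S ∈ v.Mset j) : exchange i j S ∈ v.Mset i := by
  simp only [Mset, mem_filter, mem_univ, true_and] at hS ⊢
  exact ⟨huni.isMWC_of_card_eq hS.1 (hdom.win_exchange hS.2 hS.1.1) (card_exchange hS.2),
    mem_exchange_self i j S⟩

theorem IsUniform.sum_Mset_le_of_dominates {M : Type*} [AddCommMonoid M] [PartialOrder M]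
    [IsOrderedAddMonoid M] (huni : v.IsUniform) {i j : Fin n} (hdom : v.Dominates i j)
    (g : ℕ → M) (hg : ∀ k, 0 ≤ g k) :
    ∑ S ∈ v.Mset j, g S.card ≤ ∑ S ∈ v.Mset i, g S.card := by
  rcases eq_or_ne i j with rfl | hij
  · rfl
  have hinj : Set.InjOn (exchange i j) (v.Mset j) := fun S hS T hT =>
    injOn_exchange hij (mem_filter.mp hS).2.2 (mem_filter.mp hT).2.2
  calc ∑ S ∈ v.Mset j, g S.card
      = ∑ S ∈ (v.Mset j).image (exchange i j), g S.card := by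
        rw [sum_image hinj]
        exact sum_congr rfl fun S hS => by rw [card_exchange (mem_filter.mp hS).2.2]
    _ ≤ ∑ S ∈ v.Mset i, g S.card :=
        sum_le_sum_of_subset_of_nonneg
          (image_subset_iff.mpr fun _ => huni.exchange_mem_Mset hdom) fun _ _ _ => hg _

theorem IsUniform.PGI_le_of_dominates (huni : v.IsUniform) {i j : Fin n}
    (hdom : v.Dominates i j) : v.PGI j ≤ v.PGI i := by
  simpa only [PGI, card_eq_sum_ones] using
    huni.sum_Mset_le_of_dominates hdom (fun _ => 1) fun _ => zero_le_one

theorem IsUniform.DP_le_of_dominates (huni : v.IsUniform) {i j : Fin n}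
    (hdom : v.Dominates i j) : v.DP j ≤ v.DP i :=
  huni.sum_Mset_le_of_dominates hdom (fun k => 1 / (k : ℝ)) fun _ => by positivity

theorem IsWeightedRep.dominates {q : ℝ} {w : Fin n → ℝ} (hrep : v.IsWeightedRep q w)
    {i j : Fin n} (hw : w j ≤ w i) : v.Dominates i j := by
  intro S hj hi
  have hsum : ∑ k ∈ (S ∪ {i}) \ {j}, w k = ∑ k ∈ S, w k - w j + w i := by
    rw [sum_sdiff_eq_sub (singleton_subset_iff.mpr (mem_union_left _ hj)),
      sum_union (disjoint_singleton_right.mpr hi), sum_singleton, sum_singleton]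
    ring
  rw [Bool.le_iff_imp, hrep.2.2, hrep.2.2, hsum]
  intro h
  linarith

end SimpleGame

/-- For a uniform weighted game with representation `[q; w]`,
the raw Public Good and Deegan-Packel indices satisfy local monotonicity:
`w i ≥ w j` implies `PGI i ≥ PGI j` and `DP i ≥ DP j`. -/
theorem pgi_dp_local_monotonicity_of_uniform_weighted {n : ℕ} (v : SimpleGame n)
    (q : ℝ) (w : Fin n → ℝ) (hrep : v.IsWeightedRep q w) (huni : v.IsUniform)
    (i j : Fin n) (hw : w j ≤ w i) :
    v.PGI j ≤ v.PGI i ∧ v.DP j ≤ v.DP i :=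
  have hdom := hrep.dominates hw
  ⟨huni.PGI_le_of_dominates hdom, huni.DP_le_of_dominates hdom⟩
end

section
/- Let v be a flat complete simple game on N = {1,…,n}. Then the raw Deegan-Packel index satisfies the dominance property on v: for all players i, j with i ⊒ j one has DP^r_i(v) ≥ DP^r_j(v). -/
open scoped Classical

/-- The layer relation `i ≿ j`: for every `k = 1,…,n` the partial sums
`Σ_{l=1}^k |M_i(l)|` dominate those of `j`. -/
def SimpleGame.LayerGE {n : ℕ} (v : SimpleGame n) (i j : Fin n) : Prop :=
  ∀ k ∈ Finset.Icc 1 n,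
    ∑ l ∈ Finset.Icc 1 k, (v.Mlset j l).card ≤ ∑ l ∈ Finset.Icc 1 k, (v.Mlset i l).card

/-- The game is flat if any two players are comparable under the layer relation. -/
def SimpleGame.IsFlat {n : ℕ} (v : SimpleGame n) : Prop :=
  ∀ i j : Fin n, v.LayerGE i j ∨ v.LayerGE j i

/-!
Write `C_i(k)` for the number of minimal winning coalitions of size at most `k` containing `i`;
the layer relation compares these counts, and `DP^r` is their Abel transform against the
decreasing weights `1/l`, so `i ≿ j` already gives `DP^r_j ≤ DP^r_i`.

To get `i ≿ j` from `i ⊒ j`, replace `j` by `i` in every minimal winning coalition of `M_j`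
that does not contain `i`. While no winning coalition of size `< k` containing `i` but not `j`
turns losing when `i` is replaced by `j`, this is an injection of the coalitions of size `≤ k`
of `M_j` into those of `M_i`, so `C_j(k) ≤ C_i(k)`. If such a coalition exists, one `S₀` of
least size is minimal winning and is missed by the injection, so `C_j(|S₀|) < C_i(|S₀|)`;
then `j ≿ i` fails, and flatness gives `i ≿ j`.
-/

open Finset

namespace Finset

theorem sum_Icc_one_eq_sum_range {M : Type*} [AddCommMonoid M] (f : ℕ → M) (k : ℕ) :
    ∑ l ∈ Icc 1 k, f l = ∑ l ∈ range k, f (l + 1) := by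
  rw [range_eq_Ico, ← Ico_add_one_right_eq_Icc, sum_Ico_add' f 0 k 1]

theorem sum_mul_le_sum_mul_of_sum_range_le {R : Type*} [Ring R] [PartialOrder R]
    [IsOrderedRing R] {a b c : ℕ → R} {N : ℕ} (hc : Antitone c) (hc₀ : ∀ l, 0 ≤ c l)
    (hab : ∀ k ≤ N, ∑ l ∈ range k, b l ≤ ∑ l ∈ range k, a l) :
    ∑ l ∈ range N, c l * b l ≤ ∑ l ∈ range N, c l * a l := by
  have hA := sum_range_by_parts c a N
  have hB := sum_range_by_parts c b N
  simp only [smul_eq_mul] at hA hB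
  rw [hA, hB]
  refine sub_le_sub (mul_le_mul_of_nonneg_left (hab N le_rfl) (hc₀ _)) (sum_le_sum fun l hl => ?_)
  exact mul_le_mul_of_nonpos_left (hab (l + 1) (by grind))
    (sub_nonpos.2 (hc l.le_succ))

variable {α : Type*} [DecidableEq α]

def replace (S : Finset α) (j i : α) : Finset α := (S ∪ {i}) \ {j}

variable {S V : Finset α} {i j : α}

theorem mem_replace {x : α} : x ∈ S.replace j i ↔ (x ∈ S ∨ x = i) ∧ x ≠ j := by
  simp [replace, or_comm]

theorem notMem_replace : j ∉ S.replace j i := by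
  simp [mem_replace]

theorem mem_replace_self (hij : i ≠ j) : i ∈ S.replace j i := by
  simp [mem_replace, hij]

theorem card_replace (hj : j ∈ S) (hi : i ∉ S) : (S.replace j i).card = S.card := by
  rw [replace, union_comm, ← insert_eq, ← erase_eq,
    card_erase_of_mem (mem_insert_of_mem hj), card_insert_of_notMem hi, Nat.add_sub_cancel]

theorem replace_replace (hj : j ∈ S) (hi : i ∉ S) : (S.replace j i).replace i j = S := by
  ext x
  simp only [mem_replace]
  grind

theorem replace_subset_replace (h : V ⊆ S) : V.replace j i ⊆ S.replace j i :=
  sdiff_subset_sdiff (union_subset_union h le_rfl) le_rfl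

theorem subset_replace (h : V ⊆ S) (hj : j ∉ V) : V ⊆ S.replace j i := fun _ hx =>
  mem_replace.2 ⟨Or.inl (h hx), ne_of_mem_of_not_mem hx hj⟩

theorem subset_of_subset_replace (hV : V ⊆ S.replace j i) (hi : i ∉ V) : V ⊆ S := fun _ hx =>
  (mem_replace.1 (hV hx)).1.resolve_right (ne_of_mem_of_not_mem hx hi)

theorem replace_subset_of_subset_replace (hV : V ⊆ S.replace j i) (hj : j ∈ S) :
    V.replace i j ⊆ S := by
  intro x hx
  rw [mem_replace] at hx
  rcases hx with ⟨hxV | rfl, hxi⟩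
  · exact (mem_replace.1 (hV hxV)).1.resolve_right hxi
  · exact hj

theorem injOn_ite_replace :
    Set.InjOn (fun S : Finset α => if i ∈ S then S else S.replace j i) {S | j ∈ S} := by
  intro S₁ (h₁ : j ∈ S₁) S₂ (h₂ : j ∈ S₂) heq
  by_cases hi₁ : i ∈ S₁ <;> by_cases hi₂ : i ∈ S₂ <;>
    simp only [hi₁, hi₂, if_true, if_false] at heq
  · exact heq
  · exact absurd (heq ▸ h₁) notMem_replace
  · exact absurd (heq ▸ h₂) notMem_replace
  · rw [← replace_replace h₁ hi₁, ← replace_replace h₂ hi₂, heq]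

end Finset

namespace SimpleGame

variable {n : ℕ} {v : SimpleGame n} {i j : Fin n} {S : Finset (Fin n)}

theorem mem_Mset : S ∈ v.Mset i ↔ v.IsMWC S ∧ i ∈ S := by
  simp [Mset]

theorem win_eq_false_of_subset {T : Finset (Fin n)} (h : S ⊆ T) (hT : v.win T = false) :
    v.win S = false :=
  Bool.eq_false_iff.2 fun hS => by simp [v.win_mono h hS] at hT

theorem IsMWC.card_pos (h : v.IsMWC S) : 0 < S.card :=
  Finset.card_pos.2 <| nonempty_iff_ne_empty.2 <| by rintro rfl; simpa [v.win_empty] using h.1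

theorem win_replace_of_dominates (hdom : v.Dominates i j) (hj : j ∈ S) (hi : i ∉ S)
    (hS : v.win S = true) : v.win (S.replace j i) = true := by
  have h := hdom S hj hi
  rw [hS] at h
  exact top_le_iff.1 h

/-- `U` witnesses that `j` does not dominate `i`. -/
def IsSwapLosing (v : SimpleGame n) (i j : Fin n) (U : Finset (Fin n)) : Prop :=
  v.win U = true ∧ i ∈ U ∧ j ∉ U ∧ v.win (U.replace i j) = false

theorem IsSwapLosing.isMWC (h : v.IsSwapLosing i j S)
    (hmin : ∀ U, v.IsSwapLosing i j U → S.card ≤ U.card) : v.IsMWC S := by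
  obtain ⟨hS, hi, hj, hloss⟩ := h
  refine ⟨hS, fun T hT => Bool.eq_false_iff.2 fun hTwin => ?_⟩
  have hiT : i ∈ T := by
    by_contra hiT
    simp [v.win_mono (subset_replace hT.subset hiT) hTwin] at hloss
  have hTloss : v.win (T.replace i j) = false :=
    win_eq_false_of_subset (replace_subset_replace hT.subset) hloss
  exact (hmin T ⟨hTwin, hiT, fun h => hj (hT.subset h), hTloss⟩).not_gt (card_lt_card hT)

theorem not_isSwapLosing_replace (hS : v.win S = true) (hj : j ∈ S) (hi : i ∉ S) :
    ¬ v.IsSwapLosing i j (S.replace j i) := fun h => by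
  simpa [replace_replace hj hi, hS] using h.2.2.2

theorem isMWC_replace (hdom : v.Dominates i j) (hS : v.IsMWC S) (hj : j ∈ S) (hi : i ∉ S)
    (hsmall : ∀ U, v.IsSwapLosing i j U → S.card ≤ U.card) : v.IsMWC (S.replace j i) := by
  refine ⟨win_replace_of_dominates hdom hj hi hS.1, fun V hV =>
    Bool.eq_false_iff.2 fun hV_win => ?_⟩
  have hjV : j ∉ V := fun h => notMem_replace (hV.subset h)
  have hiV : i ∈ V := by
    by_contra hiV
    have hVS : V ⊂ S := ⟨subset_of_subset_replace hV.subset hiV, fun h => hjV (h hj)⟩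
    simp [hS.2 V hVS] at hV_win
  have hcard : (V.replace i j).card < S.card := by
    rw [card_replace hiV hjV, ← card_replace hj hi]
    exact card_lt_card hV
  have hback : v.win (V.replace i j) = true := by
    by_contra hloss
    exact (hsmall V ⟨hV_win, hiV, hjV, by simpa using hloss⟩).not_gt
      (by rwa [card_replace hiV hjV] at hcard)
  have hsub : V.replace i j ⊂ S :=
    ⟨replace_subset_of_subset_replace hV.subset hj, fun h => (card_le_card h).not_gt hcard⟩
  simp [hS.2 _ hsub] at hback

theorem card_filter_Mset_le (hdom : v.Dominates i j) {k : ℕ}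
    (hk : ∀ U, v.IsSwapLosing i j U → k ≤ U.card) :
    #{S ∈ v.Mset j | S.card ≤ k} ≤
      #{S ∈ v.Mset i | S.card ≤ k ∧ ¬ v.IsSwapLosing i j S} := by
  refine card_le_card_of_injOn (fun S => if i ∈ S then S else S.replace j i) ?_
    (injOn_ite_replace.mono fun S hS => (mem_Mset.1 (mem_filter.1 hS).1).2)
  intro S hS
  simp only [mem_coe, mem_filter, mem_Mset] at hS ⊢
  obtain ⟨⟨hS, hj⟩, hcard⟩ := hS
  by_cases hi : i ∈ S
  · rw [if_pos hi]
    exact ⟨⟨hS, hi⟩, hcard, fun h => h.2.2.1 hj⟩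
  · rw [if_neg hi]
    have hij : i ≠ j := fun h => hi (h ▸ hj)
    have hS' := isMWC_replace hdom hS hj hi fun U hU => hcard.trans (hk U hU)
    exact ⟨⟨hS', mem_replace_self hij⟩,
      (card_replace hj hi).symm ▸ hcard, not_isSwapLosing_replace hS.1 hj hi⟩

theorem sum_Icc_card_Mlset (v : SimpleGame n) (i : Fin n) (k : ℕ) :
    ∑ l ∈ Icc 1 k, #(v.Mlset i l) = #{S ∈ v.Mset i | S.card ≤ k} := by
  rw [card_eq_sum_card_fiberwise (f := card) (t := Icc 1 k) fun S hS => ?_]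
  · refine sum_congr rfl fun l hl => ?_
    rw [Mlset, filter_filter]
    refine congrArg card (filter_congr fun S _ => ?_)
    grind
  · simp only [mem_coe, mem_filter, mem_Mset] at hS
    exact mem_Icc.2 ⟨hS.1.1.card_pos, hS.2⟩

theorem layerGE_of_dominates (hflat : v.IsFlat) (hdom : v.Dominates i j) : v.LayerGE i j := by
  by_cases hswap : ∃ U, v.IsSwapLosing i j U
  · obtain ⟨S₀, hS₀, hmin⟩ := exists_min_image {U | v.IsSwapLosing i j U} card
      (by simpa [filter_nonempty_iff] using hswap)
    simp only [mem_filter, mem_univ, true_and] at hS₀ hmin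
    have hS₀mwc := hS₀.isMWC hmin
    have hlt :
        #{S ∈ v.Mset j | S.card ≤ S₀.card} < #{S ∈ v.Mset i | S.card ≤ S₀.card} := by
      refine (card_filter_Mset_le hdom hmin).trans_lt (card_lt_card ?_)
      rw [← filter_filter]
      exact filter_ssubset.2
        ⟨S₀, by simp [mem_Mset, hS₀mwc, hS₀.2.1], by simpa using hS₀⟩
    refine (hflat i j).resolve_right fun hji => ?_
    have hle := hji S₀.card (mem_Icc.2 ⟨hS₀mwc.card_pos, by simpa using card_le_univ S₀⟩)
    rw [sum_Icc_card_Mlset, sum_Icc_card_Mlset] at hle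
    exact hle.not_gt hlt
  · push Not at hswap
    intro k _
    rw [sum_Icc_card_Mlset, sum_Icc_card_Mlset]
    exact (card_filter_Mset_le hdom fun U hU => (hswap U hU).elim).trans
      (card_le_card (monotone_filter_right _ fun _ _ h => h.1))

theorem dp_eq_sum_range (v : SimpleGame n) (i : Fin n) :
    v.DP i = ∑ l ∈ range n, 1 / ((l : ℝ) + 1) * #(v.Mlset i (l + 1)) := by
  rw [DP, ← sum_fiberwise_of_maps_to (g := card) (t := Icc 1 n) fun S hS => ?_,
    sum_Icc_one_eq_sum_range]
  · refine sum_congr rfl fun l _ => ?_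
    rw [sum_congr rfl fun S hS => by rw [(mem_filter.1 hS).2], sum_const, nsmul_eq_mul, Mlset]
    push_cast
    ring
  · exact mem_Icc.2 ⟨(mem_Mset.1 hS).1.card_pos, by simpa using card_le_univ S⟩

theorem dp_le_dp_of_layerGE (h : v.LayerGE i j) : v.DP j ≤ v.DP i := by
  rw [dp_eq_sum_range, dp_eq_sum_range]
  refine sum_mul_le_sum_mul_of_sum_range_le (fun a b hab => ?_) (fun l => by positivity)
    fun k hk => ?_
  · gcongr
  · rcases k.eq_zero_or_pos with rfl | hk₀
    · simp
    · have := h k (mem_Icc.2 ⟨hk₀, hk⟩)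
      rw [sum_Icc_one_eq_sum_range, sum_Icc_one_eq_sum_range] at this
      exact_mod_cast this

end SimpleGame

theorem dp_dominance_of_flat_complete_general {n : ℕ} (v : SimpleGame n)
    (hflat : v.IsFlat) (i j : Fin n)
    (hdom : v.Dominates i j) : v.DP j ≤ v.DP i :=
  SimpleGame.dp_le_dp_of_layerGE (SimpleGame.layerGE_of_dominates hflat hdom)

/-- For a flat complete simple game, the raw Deegan-Packel index
satisfies the dominance property. -/
theorem dp_dominance_of_flat_complete {n : ℕ} (v : SimpleGame n)
    (hcomp : v.IsComplete) (hflat : v.IsFlat) (i j : Fin n)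
    (hdom : v.Dominates i j) : v.DP j ≤ v.DP i :=
  dp_dominance_of_flat_complete_general v hflat i j hdom
end

section
/- Let 𝔊 be a class of weighted games, n a positive integer, and 𝒫 = (P^1,…,P^r) with r ≥ 2 a collection of power indices on 𝔊 such that P^1 satisfies local monotonicity. Then the infimum defining the cost of local monotonicity is attained: for every α ∈ 𝕊^r with α_1 ≥ c_𝒫(n,𝔊), the convex combination P^{α} satisfies local monotonicity on the n-player games of 𝔊; i.e., c_𝒫(n,𝔊) = min{β ≥ 0 : P^{α} satisfies LM on the n-player games of 𝔊 for all α ∈ 𝕊^r with α_1 ≥ β}. -/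
open scoped Classical

/-!
For fixed weights `α`, local monotonicity of `P^α` is a family of non-strict linear inequalities
in `α`, hence a closed condition. If `c_𝒫(n,𝔊) < 1`, every `α ∈ 𝕊^r` with `α_1 = c_𝒫(n,𝔊)` is the
limit of the points of the open segment from `α` to the vertex `e_1`, all of which have first
coordinate above the cost and therefore give locally monotone combinations. If the cost is `1`,
the only admissible weight vector is `e_1`, for which `P^α = P^1`.
-/

open Set

lemma eq_single_of_mem_stdSimplex {ι : Type*} [Fintype ι] [DecidableEq ι] {α : ι → ℝ}
    (hα : α ∈ stdSimplex ℝ ι) {i : ι} (hi : α i = 1) : α = Pi.single i 1 := by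
  have hrest : ∑ j ∈ Finset.univ.erase i, α j = 0 := by
    have := Finset.add_sum_erase Finset.univ α (Finset.mem_univ i)
    linarith [hα.2]
  funext j
  by_cases hj : j = i
  · subst hj; simp [hi]
  · rw [Pi.single_eq_of_ne hj]
    exact (Finset.sum_eq_zero_iff_of_nonneg fun k _ => hα.1 k).mp hrest j (by simp [hj])

lemma convexComb_single {r : ℕ} (P : Fin r → PowerIndex) (i : Fin r) :
    convexComb (Pi.single i 1) P = P i := by
  funext n v k
  simp [convexComb, Pi.single_apply]

lemma isClosed_setOf_lMon_convexComb {r : ℕ} (P : Fin r → PowerIndex) (𝔊 : GameClass) (n : ℕ) :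
    IsClosed {α : Fin r → ℝ | LMon 𝔊 n (convexComb α P)} := by
  simp only [LMon, convexComb, ofPred_forall]
  exact isClosed_iInter fun v => isClosed_iInter fun _ => isClosed_iInter fun i =>
    isClosed_iInter fun j => isClosed_iInter fun _ => isClosed_le (by fun_prop) (by fun_prop)

/-- `costLM` is the infimum of the thresholds in `[0,1]`. -/
def IsLMThreshold {r : ℕ} [NeZero r] (P : Fin r → PowerIndex) (𝔊 : GameClass) (n : ℕ)
    (β : ℝ) : Prop :=
  ∀ α ∈ stdSimplex ℝ (Fin r), β ≤ α 0 → LMon 𝔊 n (convexComb α P)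

namespace IsLMThreshold

variable {r : ℕ} [NeZero r] {P : Fin r → PowerIndex} {𝔊 : GameClass} {n : ℕ} {β γ : ℝ}

lemma mono (hβγ : β ≤ γ) (hβ : IsLMThreshold P 𝔊 n β) : IsLMThreshold P 𝔊 n γ :=
  fun α hα hγ => hβ α hα (hβγ.trans hγ)

lemma one (hP : LMon 𝔊 n (P 0)) : IsLMThreshold P 𝔊 n 1 := by
  intro α hα h1
  rw [eq_single_of_mem_stdSimplex hα (le_antisymm (mem_Icc_of_mem_stdSimplex hα 0).2 h1),
    convexComb_single]
  exact hP

lemma of_forall_gt (hβ1 : β < 1) (h : ∀ γ, β < γ → IsLMThreshold P 𝔊 n γ) :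
    IsLMThreshold P 𝔊 n β := by
  intro α hα hβα
  have hseg : openSegment ℝ α (Pi.single 0 1) ⊆ {α | LMon 𝔊 n (convexComb α P)} := by
    intro z hz
    have hzΔ := (convex_stdSimplex ℝ (Fin r)).openSegment_subset hα (single_mem_stdSimplex ℝ 0) hz
    obtain ⟨a, b, ha, hb, hab, rfl⟩ := hz
    have hz0 : β < a * α 0 + b := by nlinarith
    exact h _ (by simpa using hz0) _ hzΔ le_rfl
  exact closure_minimal hseg (isClosed_setOf_lMon_convexComb P 𝔊 n)
    (segment_subset_closure_openSegment (left_mem_segment ℝ α _))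

end IsLMThreshold

theorem costLM_attained_general {r : ℕ} [NeZero r] (n : ℕ)
    (𝔊 : GameClass)
    (P : Fin r → PowerIndex) (hP1 : LMon 𝔊 n (P 0)) :
    (∀ α ∈ stdSimplex ℝ (Fin r), costLM P n 𝔊 ≤ α 0 → LMon 𝔊 n (convexComb α P)) ∧
    IsLeast {β : ℝ | 0 ≤ β ∧
        ∀ α ∈ stdSimplex ℝ (Fin r), β ≤ α 0 → LMon 𝔊 n (convexComb α P)}
      (costLM P n 𝔊) := by
  set S := {β : ℝ | β ∈ Icc (0 : ℝ) 1 ∧ IsLMThreshold P 𝔊 n β}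
  have hcost : costLM P n 𝔊 = sInf S := rfl
  have hone : (1 : ℝ) ∈ S := ⟨⟨zero_le_one, le_rfl⟩, IsLMThreshold.one hP1⟩
  have hbdd : BddBelow S := ⟨0, fun β hβ => hβ.1.1⟩
  have hgt : ∀ γ, sInf S < γ → IsLMThreshold P 𝔊 n γ := fun γ hγ => by
    obtain ⟨β, hβ, hβγ⟩ := exists_lt_of_csInf_lt ⟨1, hone⟩ hγ
    exact hβ.2.mono hβγ.le
  have hmin : IsLMThreshold P 𝔊 n (sInf S) := by
    rcases (csInf_le hbdd hone).lt_or_eq with hlt | heq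
    · exact IsLMThreshold.of_forall_gt hlt hgt
    · exact heq ▸ hone.2
  rw [hcost]
  refine ⟨hmin, ⟨le_csInf ⟨1, hone⟩ fun β hβ => hβ.1.1, hmin⟩, fun β ⟨hβ0, hβ⟩ => ?_⟩
  rcases le_or_gt β 1 with hβ1 | hβ1
  · exact csInf_le hbdd ⟨⟨hβ0, hβ1⟩, hβ⟩
  · exact (csInf_le hbdd hone).trans hβ1.le

/-- the infimum defining the cost of local monotonicity is attained:
`P^α` is locally monotonic for every `α ∈ 𝕊^r` with `α_1 ≥ c_𝒫(n,𝔊)`, i.e.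
`c_𝒫(n,𝔊)` is the minimum of `{β ≥ 0 : P^α satisfies LM for all α with α_1 ≥ β}`. -/
theorem costLM_attained {r : ℕ} [NeZero r] (hr : 2 ≤ r) (n : ℕ) (hn : 0 < n)
    (𝔊 : GameClass) (h𝔊 : ∀ m, ∀ v ∈ 𝔊 m, v.IsWeighted)
    (P : Fin r → PowerIndex) (hP1 : LMon 𝔊 n (P 0)) :
    (∀ α ∈ stdSimplex ℝ (Fin r), costLM P n 𝔊 ≤ α 0 → LMon 𝔊 n (convexComb α P)) ∧
    IsLeast {β : ℝ | 0 ≤ β ∧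
        ∀ α ∈ stdSimplex ℝ (Fin r), β ≤ α 0 → LMon 𝔊 n (convexComb α P)}
      (costLM P n 𝔊) :=
  costLM_attained_general n 𝔊 P hP1
end

section
/- For 𝒫 = (Bz^r, PGI^r) and all n ≥ 3, the cost of local monotonicity on the class 𝔚^p of proper weighted games satisfies c_𝒫(n,𝔚^p) ≥ max(0, (n−4)/(n−2)). -/
open scoped Classical

/-- `𝔚^p`: the class of proper weighted games. -/
def ProperWeightedClass : GameClass := fun n =>
  {v | v.IsWeighted ∧
    ∀ S : Finset (Fin n), v.win S = true → v.win (Finset.univ \ S) = false}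

/-!
The weighted game `[m + 3; m + 1, 2, 1, …, 1]` on `n = m + 3` players is proper, its total weight
`2m + 4` being less than twice the quota. In it player `1` dominates player `2`, but player `2`
lies in the `m + 1` minimal winning coalitions `N ∖ {0}` and `{0, 2, y}` (`y ∉ {0, 1, 2}`), while
player `1` lies only in `{0, 1}` and `N ∖ {0}`. The coalitions decisive for `1` are `N ∖ {0}`,
`{0, 1}` and `{0, 1, y}`, so `Bz^r_1 ≤ m + 3`, and `Bz^r_2 ≥ PGI^r_2 ≥ m + 1`. Local monotonicity
of `β Bz^r + (1 - β) PGI^r` at this pair forces `β (m + 1) ≥ m - 1`, i.e. `β ≥ (n - 4) / (n - 2)`.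

The infimum is over a nonempty set since `Bz^r` alone is locally monotone: if `i ⊒ j`, the
transposition `(i j)` maps `D_j` injectively into `D_i`.
-/

open Finset

namespace SimpleGame

variable {n : ℕ}

theorem IsMWC.eq_of_subset {v : SimpleGame n} {S T : Finset (Fin n)} (hS : v.IsMWC S)
    (hTS : T ⊆ S) (hT : v.win T = true) : T = S := by
  by_contra hne
  simp [hS.2 T (hTS.ssubset_of_ne hne)] at hT

theorem Mset_subset_Dset (v : SimpleGame n) (i : Fin n) : v.Mset i ⊆ v.Dset i := by
  intro S hS
  simp only [Mset, Dset, mem_filter, mem_univ, true_and] at hS ⊢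
  exact ⟨hS.2, hS.1.1, hS.1.2 _ (erase_ssubset hS.2)⟩

theorem PGI_le_Bz (v : SimpleGame n) (i : Fin n) : v.PGI i ≤ v.Bz i :=
  card_le_card (v.Mset_subset_Dset i)

theorem map_swap_eq_self {i j : Fin n} {S : Finset (Fin n)} (hi : i ∈ S) (hj : j ∈ S) :
    S.map (Equiv.swap i j).toEmbedding = S := by
  ext x
  rw [mem_map_equiv, Equiv.symm_swap]
  rcases eq_or_ne x i with rfl | hxi
  · simp [hi, hj]
  rcases eq_or_ne x j with rfl | hxj
  · simp [hi, hj]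
  · rw [Equiv.swap_apply_of_ne_of_ne hxi hxj]

theorem map_swap_eq_insert_erase {i j : Fin n} {S : Finset (Fin n)} (hi : i ∉ S)
    (hj : j ∈ S) : S.map (Equiv.swap i j).toEmbedding = insert i (S.erase j) := by
  ext x
  rw [mem_map_equiv, Equiv.symm_swap, mem_insert, mem_erase]
  rcases eq_or_ne x i with rfl | hxi
  · simp [hj]
  rcases eq_or_ne x j with rfl | hxj
  · simp [hi, hxi]
  · simp [Equiv.swap_apply_of_ne_of_ne hxi hxj, hxi, hxj]

theorem map_swap_mem_Dset {v : SimpleGame n} {i j : Fin n} (hij : i ≠ j)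
    (h : v.Dominates i j) {S : Finset (Fin n)} (hS : S ∈ v.Dset j) :
    S.map (Equiv.swap i j).toEmbedding ∈ v.Dset i := by
  simp only [Dset, mem_filter, mem_univ, true_and] at hS ⊢
  obtain ⟨hjS, hwin, hlose⟩ := hS
  by_cases hiS : i ∈ S
  · have hdom := h (S.erase i) (mem_erase.2 ⟨hij.symm, hjS⟩) (notMem_erase i S)
    rw [union_singleton, insert_erase hiS, sdiff_singleton_eq_erase, hlose] at hdom
    rw [map_swap_eq_self hiS hjS]
    exact ⟨hiS, hwin, by simpa [Bool.le_iff_imp] using hdom⟩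
  · have hdom := h S hjS hiS
    rw [union_singleton, sdiff_singleton_eq_erase, hwin, erase_insert_of_ne hij] at hdom
    rw [map_swap_eq_insert_erase hiS hjS, erase_insert fun h => hiS (mem_of_mem_erase h)]
    exact ⟨mem_insert_self _ _, by simpa [Bool.le_iff_imp] using hdom, hlose⟩

theorem Bz_le_Bz_of_dominates {v : SimpleGame n} {i j : Fin n} (h : v.Dominates i j) :
    v.Bz j ≤ v.Bz i := by
  rcases eq_or_ne i j with rfl | hij
  · rfl
  exact card_le_card_of_injOn _ (fun S hS => map_swap_mem_Dset hij h hS)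
    (map_injective _).injOn

def ofWeights (q : ℕ) (w : Fin n → ℕ) (hq : 0 < q) (hqw : q ≤ ∑ i, w i) :
    SimpleGame n where
  win S := decide (q ≤ ∑ i ∈ S, w i)
  win_empty := by simpa using hq.ne'
  win_univ := by simpa using hqw
  win_mono S T hST hS := by
    simp only [decide_eq_true_eq] at hS ⊢
    exact hS.trans (sum_le_sum_of_subset hST)

section ofWeights

variable {q : ℕ} {w : Fin n → ℕ} {hq : 0 < q} {hqw : q ≤ ∑ i, w i}

theorem ofWeights_win_eq_true {S : Finset (Fin n)} :
    (ofWeights q w hq hqw).win S = true ↔ q ≤ ∑ i ∈ S, w i := by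
  simp [ofWeights]

theorem isWeighted_ofWeights : (ofWeights q w hq hqw).IsWeighted :=
  ⟨q, fun i => w i, by exact_mod_cast hq, fun i => by positivity, fun S => by
    rw [ofWeights_win_eq_true, ← Nat.cast_sum, Nat.cast_le]⟩

theorem ofWeights_win_compl (htot : ∑ i, w i < 2 * q) {S : Finset (Fin n)}
    (hS : (ofWeights q w hq hqw).win S = true) :
    (ofWeights q w hq hqw).win (univ \ S) = false := by
  have hsplit := sum_sdiff (f := w) (subset_univ S)
  rw [ofWeights_win_eq_true] at hS
  simp only [ofWeights, decide_eq_false_iff_not, not_le]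
  omega

theorem ofWeights_dominates {i j : Fin n} (hw : w j ≤ w i) :
    (ofWeights q w hq hqw).Dominates i j := by
  intro S hjS hiS
  rw [Bool.le_iff_imp, ofWeights_win_eq_true, ofWeights_win_eq_true, union_singleton,
    sdiff_singleton_eq_erase, erase_insert_of_ne (ne_of_mem_of_not_mem hjS hiS).symm,
    sum_insert fun h => hiS (mem_of_mem_erase h), ← add_sum_erase S w hjS]
  omega

theorem ofWeights_isMWC (hpos : ∀ i, 0 < w i) {S : Finset (Fin n)}
    (hS : ∑ i ∈ S, w i = q) : (ofWeights q w hq hqw).IsMWC S := by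
  refine ⟨ofWeights_win_eq_true.2 hS.ge, fun T hTS => ?_⟩
  obtain ⟨x, hxS, hxT⟩ := exists_of_ssubset hTS
  have := sum_lt_sum_of_subset hTS.subset hxS hxT (hpos x) fun _ _ _ => Nat.zero_le _
  simp only [ofWeights, decide_eq_false_iff_not, not_le]
  omega

end ofWeights

end SimpleGame

theorem convexComb_eq_of_one_le {r : ℕ} [NeZero r] {α : Fin r → ℝ}
    (hα : α ∈ stdSimplex ℝ (Fin r)) (h1 : 1 ≤ α 0) (P : Fin r → PowerIndex) :
    convexComb α P = P 0 := by
  have hsum : α 0 + ∑ h ∈ univ.erase 0, α h = 1 := by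
    rw [add_sum_erase univ α (mem_univ 0), hα.2]
  have hrest : ∑ h ∈ univ.erase 0, α h = 0 := by
    linarith [sum_nonneg fun h (_ : h ∈ univ.erase 0) => hα.1 h]
  have hzero : ∀ h ∈ univ.erase 0, α h = 0 :=
    (sum_eq_zero_iff_of_nonneg fun h _ => hα.1 h).1 hrest
  funext n v i
  rw [convexComb, sum_eq_single_of_mem 0 (mem_univ 0) fun h _ hh => by
    rw [hzero h (mem_erase.2 ⟨hh, mem_univ h⟩), zero_mul], show α 0 = 1 by linarith, one_mul]

theorem convexComb_pair_apply (a b : ℝ) (P Q : PowerIndex) (n : ℕ) (v : SimpleGame n)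
    (i : Fin n) : convexComb ![a, b] ![P, Q] n v i = a * P n v i + b * Q n v i := by
  simp [convexComb, Fin.sum_univ_two]

theorem pair_mem_stdSimplex {b : ℝ} (h0 : 0 ≤ b) (h1 : b ≤ 1) :
    ![b, 1 - b] ∈ stdSimplex ℝ (Fin 2) :=
  ⟨fun i => by fin_cases i <;> simp [h0, h1], by simp⟩

theorem lmon_BzPI (𝔊 : GameClass) (n : ℕ) : LMon 𝔊 n BzPI :=
  fun _ _ _ _ h => Nat.cast_le.2 (SimpleGame.Bz_le_Bz_of_dominates h)

namespace CostLMWitness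

open SimpleGame

variable (m : ℕ)

/-- The weights `m + 1, 2, 1, …, 1`, written so that their sum over a coalition is easy to
compute. -/
def weight (i : Fin (m + 3)) : ℕ := 1 + (if i = 0 then m else 0) + (if i = 1 then 1 else 0)

variable {m}

theorem sum_weight (S : Finset (Fin (m + 3))) :
    ∑ i ∈ S, weight m i = #S + (if 0 ∈ S then m else 0) + (if 1 ∈ S then 1 else 0) := by
  simp [weight, sum_add_distrib, sum_ite_eq']

theorem sum_weight_univ : ∑ i, weight m i = 2 * m + 4 := by
  rw [sum_weight]
  simp only [card_univ, Fintype.card_fin, mem_univ, if_true]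
  omega

theorem zero_ne_one_ne_two :
    (0 : Fin (m + 3)) ≠ 1 ∧ (0 : Fin (m + 3)) ≠ 2 ∧ (1 : Fin (m + 3)) ≠ 2 := by
  simp [Fin.ext_iff, Nat.mod_eq_of_lt (show 2 < m + 3 by omega)]

variable (m)

def game : SimpleGame (m + 3) :=
  ofWeights (m + 3) (weight m) (by omega) (by rw [sum_weight_univ]; omega)

variable {m}

theorem game_win_iff {S : Finset (Fin (m + 3))} :
    (game m).win S = true ↔
      m + 3 ≤ #S + (if 0 ∈ S then m else 0) + (if 1 ∈ S then 1 else 0) := by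
  rw [game, ofWeights_win_eq_true, sum_weight]

theorem game_isMWC {S : Finset (Fin (m + 3))}
    (hS : #S + (if 0 ∈ S then m else 0) + (if 1 ∈ S then 1 else 0) = m + 3) :
    (game m).IsMWC S :=
  ofWeights_isMWC (fun i => by simp [weight]) (by rw [sum_weight, hS])

theorem game_mem : game m ∈ ProperWeightedClass (m + 3) :=
  ⟨isWeighted_ofWeights, fun _ => ofWeights_win_compl (by rw [sum_weight_univ]; omega)⟩

theorem game_dominates_one_two : (game m).Dominates 1 2 := by
  obtain ⟨-, h02, h12⟩ := zero_ne_one_ne_two (m := m)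
  exact ofWeights_dominates (by simp [weight, h02.symm, h12.symm])

theorem eq_univ_erase_zero_of_win {S : Finset (Fin (m + 3))} (h0 : 0 ∉ S)
    (hS : (game m).win S = true) : S = univ.erase 0 := by
  have hsub : S ⊆ univ.erase 0 := fun x hx =>
    mem_erase.2 ⟨ne_of_mem_of_not_mem hx h0, mem_univ x⟩
  refine eq_of_subset_of_card_le hsub ?_
  rw [game_win_iff, if_neg h0] at hS
  have : #(univ.erase (0 : Fin (m + 3))) = m + 2 := by simp
  split_ifs at hS <;> omega

theorem PGI_one_le : (game m).PGI 1 ≤ 2 := by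
  obtain ⟨h01, -, -⟩ := zero_ne_one_ne_two (m := m)
  have hsub : (game m).Mset 1 ⊆ {{0, 1}, univ.erase 0} := by
    intro S hS
    simp only [Mset, mem_filter, mem_univ, true_and] at hS
    obtain ⟨hmwc, h1⟩ := hS
    by_cases h0 : 0 ∈ S
    · have hwin : (game m).win {0, 1} = true := by
        rw [game_win_iff, card_pair h01, if_pos (mem_insert_self _ _),
          if_pos (mem_insert_of_mem (mem_singleton_self _))]
        omega
      simp [hmwc.eq_of_subset (insert_subset h0 (singleton_subset_iff.2 h1)) hwin]
    · simp [eq_univ_erase_zero_of_win h0 hmwc.1]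
  exact (card_le_card hsub).trans card_le_two

theorem Bz_one_le : (game m).Bz 1 ≤ m + 3 := by
  obtain ⟨h01, -, -⟩ := zero_ne_one_ne_two (m := m)
  have hsub : (game m).Dset 1 ⊆
      insert (univ.erase 0) ((univ.erase 0).image fun y => {0, 1, y}) := by
    intro S hS
    simp only [Dset, mem_filter, mem_univ, true_and] at hS
    obtain ⟨h1, hwin, hlose⟩ := hS
    by_cases h0 : 0 ∈ S
    · have hcard : #((S.erase 1).erase 0) ≤ 1 := by
        have h0' : 0 ∈ S.erase 1 := mem_erase.2 ⟨h01, h0⟩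
        rw [← Bool.not_eq_true, game_win_iff, if_pos h0', if_neg (notMem_erase 1 S)] at hlose
        rw [card_erase_of_mem h0']
        omega
      obtain ⟨y, hy⟩ := card_le_one_iff_subset_singleton.1 hcard
      have hS : S = insert 1 (insert 0 ((S.erase 1).erase 0)) := by
        rw [insert_erase (mem_erase.2 ⟨h01, h0⟩), insert_erase h1]
      refine mem_insert_of_mem (mem_image.2 ?_)
      rcases subset_singleton_iff.1 hy with hT | hT
      · exact ⟨1, by simp [h01.symm], by rw [hS, hT]; simp [pair_comm]⟩
      · have hy0 : y ≠ 0 := by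
          have : y ∈ (S.erase 1).erase 0 := hT ▸ mem_singleton_self y
          exact ne_of_mem_erase this
        exact ⟨y, by simp [hy0], by rw [hS, hT, insert_comm]⟩
    · exact mem_insert.2 (Or.inl (eq_univ_erase_zero_of_win h0 hwin))
  refine (card_le_card hsub).trans ((card_insert_le _ _).trans ?_)
  have := card_image_le (s := univ.erase (0 : Fin (m + 3))) (f := fun y => ({0, 1, y} : Finset _))
  rw [card_erase_of_mem (mem_univ _), card_univ, Fintype.card_fin] at this
  omega

theorem le_PGI_two : m + 1 ≤ (game m).PGI 2 := by
  obtain ⟨h01, h02, h12⟩ := zero_ne_one_ne_two (m := m)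
  have hsub : insert (univ.erase 0) (({0, 1, 2}ᶜ : Finset _).image fun y => {0, 2, y}) ⊆
      (game m).Mset 2 := by
    intro S hS
    simp only [Mset, mem_filter, mem_univ, true_and]
    rcases mem_insert.1 hS with rfl | hS
    · exact ⟨game_isMWC (by simp [h01.symm]), by simp [h02.symm]⟩
    · obtain ⟨y, hy, rfl⟩ := mem_image.1 hS
      simp only [mem_compl, mem_insert, mem_singleton, not_or] at hy
      obtain ⟨hy0, hy1, hy2⟩ := hy
      refine ⟨game_isMWC ?_, by simp⟩
      simp [h02, h12, Ne.symm hy0, Ne.symm hy1, Ne.symm hy2, add_comm]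
  have hinj : Set.InjOn (fun y => ({0, 2, y} : Finset (Fin (m + 3))))
      (({0, 1, 2}ᶜ : Finset (Fin (m + 3))) : Set (Fin (m + 3))) := by
    intro y hy z _ hyz
    have : y ∈ ({0, 2, z} : Finset _) := by
      rw [← show ({0, 2, y} : Finset (Fin (m + 3))) = {0, 2, z} from hyz]
      simp
    simp only [coe_compl, Set.mem_compl_iff, mem_coe, mem_insert, mem_singleton, not_or] at hy
    simpa [hy.1, hy.2.2] using this
  have hnot : univ.erase 0 ∉
      ({0, 1, 2}ᶜ : Finset _).image fun y => ({0, 2, y} : Finset (Fin (m + 3))) := by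
    simp only [mem_image, not_exists, not_and]
    intro y _ h
    have : (0 : Fin (m + 3)) ∈ univ.erase 0 := h ▸ mem_insert_self 0 _
    simp at this
  refine le_trans ?_ (card_le_card hsub)
  rw [card_insert_of_notMem hnot, card_image_of_injOn hinj, card_compl, Fintype.card_fin]
  simp [h01, h02, h12]

theorem le_of_lmon {β : ℝ} (hβ0 : 0 ≤ β) (hβ1 : β ≤ 1)
    (h : LMon ProperWeightedClass (m + 3) (convexComb ![β, 1 - β] ![BzPI, PGIPI])) :
    (m : ℝ) - 1 ≤ β * (m + 1) := by
  have hLM := h _ game_mem _ _ game_dominates_one_two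
  simp only [convexComb_pair_apply, BzPI, PGIPI] at hLM
  have hB1 : ((game m).Bz 1 : ℝ) ≤ m + 3 := by exact_mod_cast Bz_one_le
  have hP1 : ((game m).PGI 1 : ℝ) ≤ 2 := by exact_mod_cast PGI_one_le
  have hP2 : (m : ℝ) + 1 ≤ (game m).PGI 2 := by exact_mod_cast le_PGI_two
  have hB2 : ((game m).PGI 2 : ℝ) ≤ (game m).Bz 2 := by exact_mod_cast PGI_le_Bz _ _
  nlinarith [mul_le_mul_of_nonneg_left hB1 hβ0, mul_le_mul_of_nonneg_left hP1 (sub_nonneg.2 hβ1),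
    mul_le_mul_of_nonneg_left (hP2.trans hB2) hβ0,
    mul_le_mul_of_nonneg_left hP2 (sub_nonneg.2 hβ1)]

end CostLMWitness

/-- for `𝒫 = (Bz^r, PGI^r)` and `n ≥ 3`, the cost of local
monotonicity on proper weighted games is at least `max(0, (n-4)/(n-2))`. -/
theorem costLM_Bz_PGI_proper_lower_bound (n : ℕ) (hn : 3 ≤ n) :
    max 0 (((n : ℝ) - 4) / ((n : ℝ) - 2)) ≤
      costLM ![BzPI, PGIPI] n ProperWeightedClass := by
  obtain ⟨m, rfl⟩ : ∃ m, n = m + 3 := ⟨n - 3, by omega⟩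
  refine le_csInf ⟨1, ⟨zero_le_one, le_rfl⟩, fun α hα h1 => ?_⟩ ?_
  · rw [convexComb_eq_of_one_le hα h1]
    exact lmon_BzPI _ _
  rintro β ⟨⟨hβ0, hβ1⟩, hβ⟩
  have := CostLMWitness.le_of_lmon hβ0 hβ1 (hβ _ (pair_mem_stdSimplex hβ0 hβ1) le_rfl)
  refine max_le hβ0 ((div_le_iff₀ (by push_cast; linarith)).2 ?_)
  push_cast
  linarith
end
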